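/- Let G and H be finite groups and let (X,Y) be an orthogonal pair of finite bifree (G,H)-bisets. Then there exists a group isomorphism φ : H → G such that |X^{Δ(G,φ,H)}| ≠ |Y^{Δ(G,φ,H)}|, and φ is unique up to composition with inner automorphisms of G: if ψ : H → G is another isomorphism with |X^{Δ(G,ψ,H)}| ≠ |Y^{Δ(G,ψ,H)}|, then ψ = c_g∘φ for some g ∈ G. -/

import Mathlib

open MulAction

/-- An isomorphism of `M`-sets: an equivariant bijection. -/
def IsoAsGSets (M X Y : Type*) [SMul M X] [SMul M Y] : Prop :=
  ∃ e : X ≃ Y, ∀ (m : M) (x : X), e (m • x) = m • e x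

/-- The twisted diagonal subgroup `Δ(R,α,S) = {(α s, s) | s ∈ S}` of `G × H`,
for an isomorphism `α : S ≃* R`. -/
def twistedDiagonal {G H : Type*} [Group G] [Group H] (R : Subgroup G) (S : Subgroup H)
    (α : S ≃* R) : Subgroup (G × H) :=
  ((R.subtype.comp α.toMonoidHom).prod S.subtype).range

/-- `Δ(G,φ,H) = {(φ h, h) | h ∈ H} ≤ G × H` for an isomorphism `φ : H ≃* G`. -/
def fullTwistedDiagonal {G H : Type*} [Group G] [Group H] (φ : H ≃* G) : Subgroup (G × H) :=
  (φ.toMonoidHom.prod (MonoidHom.id H)).range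

/-- The diagonal subgroup `Δ(R) = {(r,r) | r ∈ R} ≤ G × G`. -/
def diagSubgroup {G : Type*} [Group G] (R : Subgroup G) : Subgroup (G × G) :=
  (R.subtype.prod R.subtype).range

/-- A `(G,H)`-biset (i.e. a left `(G × H)`-set) is bifree if it is free as a left `G`-set
and free as a right `H`-set. -/
def IsBifree (G H X : Type*) [Group G] [Group H] [MulAction (G × H) X] : Prop :=
  (∀ (g : G) (x : X), (g, (1 : H)) • x = x → g = 1) ∧
  (∀ (h : H) (x : X), ((1 : G), h) • x = x → h = 1)

section Tensor

variable (G H K : Type*) [Group G] [Group H] [Group K]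
variable (X Y : Type*) [MulAction (G × H) X] [MulAction (H × K) Y]

/-- The relation on `X × Y` identifying `(x·h, y)` with `(x, h·y)`. -/
def bisetSetoid : Setoid (X × Y) where
  r p q := ∃ h : H, q.1 = ((1 : G), h) • p.1 ∧ q.2 = (h, (1 : K)) • p.2
  iseqv := by
    constructor
    · intro p
      exact ⟨1, by simp [Prod.mk_one_one], by simp [Prod.mk_one_one]⟩
    · rintro p q ⟨h, h1, h2⟩
      exact ⟨h⁻¹, by simp [h1, smul_smul, Prod.mk_one_one], by simp [h2, smul_smul, Prod.mk_one_one]⟩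
    · rintro p q r ⟨h, h1, h2⟩ ⟨h', h1', h2'⟩
      exact ⟨h' * h, by simp [h1, h1', smul_smul], by simp [h2, h2', smul_smul]⟩

/-- The tensor product `X ×_H Y` of a `(G,H)`-biset and an `(H,K)`-biset;
a `(G,K)`-biset. -/
def BisetTensor : Type _ :=
  Quotient (bisetSetoid G H K X Y)

variable {G H K X Y}

/-- The class of `(x, y)` in `X ×_H Y`. -/
def BisetTensor.mk (p : X × Y) : BisetTensor G H K X Y :=
  Quotient.mk (bisetSetoid G H K X Y) p

variable (G H K X Y)

instance : SMul (G × K) (BisetTensor G H K X Y) :=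
  ⟨fun a => Quotient.map (fun p => ((a.1, (1 : H)) • p.1, ((1 : H), a.2) • p.2))
    (by
      rintro p q ⟨h, h1, h2⟩
      exact ⟨h, by simp [h1, smul_smul], by simp [h2, smul_smul]⟩)⟩

variable {G H K X Y}

theorem BisetTensor.smul_mk (a : G × K) (p : X × Y) :
    a • (BisetTensor.mk p : BisetTensor G H K X Y) =
      BisetTensor.mk ((a.1, (1 : H)) • p.1, ((1 : H), a.2) • p.2) :=
  rfl

variable (G H K X Y)

instance : MulAction (G × K) (BisetTensor G H K X Y) where
  one_smul q := Quotient.inductionOn q fun p => by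
    refine Quotient.sound ⟨1, ?_, ?_⟩ <;> simp [Prod.mk_one_one]
  mul_smul a b q := Quotient.inductionOn q fun p => by
    refine Quotient.sound ⟨1, ?_, ?_⟩ <;> simp [smul_smul, Prod.mk_one_one]

end Tensor

section Op

/-- The opposite biset: a `(G,H)`-biset viewed as an `(H,G)`-biset via
`h · x · g := g⁻¹ · x · h⁻¹`. -/
def BisetOp (H G X : Type*) : Type _ := (fun _ _ => X) H G

instance BisetOp.instMulAction {G H : Type*} [Group G] [Group H] (X : Type*)
    [MulAction (G × H) X] : MulAction (H × G) (BisetOp H G X) :=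
  MulAction.compHom X (MulEquiv.prodComm : H × G ≃* G × H).toMonoidHom

instance BisetOp.instFinite {G H : Type*} (X : Type*) [Finite X] : Finite (BisetOp H G X) :=
  inferInstanceAs (Finite X)

end Op

section Grp

/-- The group `G` viewed as a `(G,G)`-biset via left and right multiplication. -/
structure BisetGrp (G : Type*) where
  /-- the underlying group element -/
  val : G

instance BisetGrp.instSMul {G : Type*} [Group G] : SMul (G × G) (BisetGrp G) :=
  ⟨fun p x => ⟨p.1 * x.val * p.2⁻¹⟩⟩

theorem BisetGrp.smul_def {G : Type*} [Group G] (p : G × G) (x : BisetGrp G) :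
    p • x = ⟨p.1 * x.val * p.2⁻¹⟩ := rfl

instance BisetGrp.instMulAction {G : Type*} [Group G] : MulAction (G × G) (BisetGrp G) where
  one_smul x := by
    cases x
    simp [BisetGrp.smul_def]
  mul_smul p q x := by
    cases x
    simp [BisetGrp.smul_def, mul_assoc]

instance BisetGrp.instFinite {G : Type*} [Finite G] : Finite (BisetGrp G) :=
  Finite.of_equiv G ⟨fun g => ⟨g⟩, fun x => x.val, fun _ => rfl, fun _ => rfl⟩

end Grp

/-- A pair `(X,Y)` of `(G,H)`-bisets is an orthogonal pair if
`(X ×_H X°) ⊔ (Y ×_H Y°) ≅ G ⊔ (X ×_H Y°) ⊔ (Y ×_H X°)` as `(G,G)`-bisets;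
this encodes the equation `([X] - [Y]) ·_H ([X] - [Y])° = [G]` in `B^Δ(G,G)`. -/
def IsOrthogonalPair (G H : Type*) [Group G] [Group H] (X Y : Type*)
    [MulAction (G × H) X] [MulAction (G × H) Y] : Prop :=
  IsoAsGSets (G × G)
    (BisetTensor G H G X (BisetOp H G X) ⊕ BisetTensor G H G Y (BisetOp H G Y))
    (BisetGrp G ⊕ (BisetTensor G H G X (BisetOp H G Y) ⊕ BisetTensor G H G Y (BisetOp H G X)))

section Iota

/-- For a `G`-set `Z`, the `(G,G)`-biset `ι(Z) = G × Z` with action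
`(g₁,g₂) • (g,z) = (g₁ g g₂⁻¹, g₂ • z)`. -/
structure IotaBiset (G Z : Type*) where
  /-- the group component -/
  fst : G
  /-- the `G`-set component -/
  snd : Z

instance IotaBiset.instSMul {G Z : Type*} [Group G] [MulAction G Z] :
    SMul (G × G) (IotaBiset G Z) :=
  ⟨fun p x => ⟨p.1 * x.fst * p.2⁻¹, p.2 • x.snd⟩⟩

theorem IotaBiset.smul_def {G Z : Type*} [Group G] [MulAction G Z] (p : G × G)
    (x : IotaBiset G Z) : p • x = ⟨p.1 * x.fst * p.2⁻¹, p.2 • x.snd⟩ := rfl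

instance IotaBiset.instMulAction {G Z : Type*} [Group G] [MulAction G Z] :
    MulAction (G × G) (IotaBiset G Z) where
  one_smul x := by
    cases x
    simp [IotaBiset.smul_def]
  mul_smul p q x := by
    cases x
    simp [IotaBiset.smul_def, mul_assoc, mul_smul]

instance IotaBiset.instFinite {G Z : Type*} [Finite G] [Finite Z] : Finite (IotaBiset G Z) :=
  Finite.of_equiv (G × Z) ⟨fun p => ⟨p.1, p.2⟩, fun x => (x.fst, x.snd), fun _ => rfl,
    fun _ => rfl⟩

end Iota

/-!
Comparing cardinalities on both sides of the orthogonality relation gives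
`(|X| - |Y|)² = |G| |H|`; since `|G|` and `|H|` both divide `|X| - |Y|`, `|G| = |H|`.

Counting free `H`-orbits, `|H|` times the number of `Δ(G)`-fixed points of `U ×_H V°` is the
number of pairs `(u, v)` whose common stabiliser projects onto `G`. For bifree `U` and `|G| = |H|`
such a stabiliser is a full twisted diagonal, so this number is
`∑_φ |U^{Δ(G,φ,H)}| |V^{Δ(G,φ,H)}|`. The `Δ(G)`-fixed points of `G` form `Z(G)`, so comparing
marks at `Δ(G)` gives
`∑_φ d(φ)² = |Z(G)| |H|` with `d(φ) = |X^{Δ(G,φ,H)}| - |Y^{Δ(G,φ,H)}|`.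

Finally `d` is constant on the orbits of `G` acting on isomorphisms by conjugation, these orbits
have `|G| / |Z(G)|` elements, and `Z(G)` acts freely on every `X^{Δ(G,φ,H)}`, so `|Z(G)|` divides
`d`. An orbit on which `d ≠ 0` therefore contributes at least `|G| |Z(G)|`, the whole sum: there
is exactly one such orbit.
-/

theorem Int.eq_of_sq_eq_mul_of_dvd {a b d : ℤ} (ha : 0 < a) (hb : 0 < b) (h : d ^ 2 = a * b)
    (hda : a ∣ d) (hdb : b ∣ d) : a = b := by
  have hab : a ∣ b := (mul_dvd_mul_iff_left ha.ne').1 (by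
    rw [← sq, ← h]; exact pow_dvd_pow_of_dvd hda 2)
  have hba : b ∣ a := (mul_dvd_mul_iff_left hb.ne').1 (by
    rw [← sq, mul_comm, ← h]; exact pow_dvd_pow_of_dvd hdb 2)
  exact Int.dvd_antisymm ha.le hb.le hab hba

section FreeAction

variable {K W : Type*} [Group K] [MulAction K W] [IsCancelSMul K W]

variable (K) in
theorem card_orbit_of_isCancelSMul (w : W) : Nat.card (orbit K w) = Nat.card K := by
  rw [Nat.card_coe_set_eq, ← index_stabilizer, IsCancelSMul.stabilizer_eq_bot, Subgroup.index_bot]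

variable (K W) in
theorem card_dvd_card_of_isCancelSMul : Nat.card K ∣ Nat.card W :=
  ⟨Nat.card (orbitRel.Quotient K W), by
    rw [Nat.card_congr (selfEquivOrbitsQuotientProd (IsCancelSMul.stabilizer_eq_bot (G := K))),
      Nat.card_prod, mul_comm]⟩

theorem card_preimage_of_fibers_eq_orbits [Finite W] {T : Type*} {f : W → T}
    (hf : Function.Surjective f) (hfib : ∀ w w', f w = f w' ↔ w ∈ orbit K w') (S : Set T) :
    Nat.card (f ⁻¹' S) = Nat.card S * Nat.card K := by
  have : Finite T := Finite.of_surjective f hf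
  have : Fintype S := Fintype.ofFinite S
  have hfiber : ∀ t : S, Nat.card {w // f w = t} = Nat.card K := by
    rintro ⟨t, -⟩
    obtain ⟨w, rfl⟩ := hf t
    rw [← card_orbit_of_isCancelSMul K w]
    exact Nat.card_congr (Equiv.subtypeEquivRight fun w' => hfib w' w)
  rw [← Nat.card_congr (Equiv.sigmaSubtypeFiberEquivSubtype f (p := (· ∈ f ⁻¹' S))
    (q := (· ∈ S)) fun _ => Iff.rfl), Nat.card_sigma, Finset.sum_congr rfl fun t _ => hfiber t,
    Finset.sum_const, smul_eq_mul, Finset.card_univ, Nat.card_eq_fintype_card (α := S)]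

end FreeAction

theorem exists_unique_orbit_ne_zero_of_sum_sq_eq {K α : Type*} [Group K] [MulAction K α]
    [Fintype α]
    {d : α → ℤ} (hd : ∀ (k : K) (a : α), d (k • a) = d a) {c n : ℕ} (hcn : 0 < c * n)
    (hdvd : ∀ a, (c : ℤ) ∣ d a) (horbit : ∀ a : α, n ≤ c * Nat.card (orbit K a))
    (hsum : ∑ a, d a ^ 2 = c * n) :
    ∃ a, d a ≠ 0 ∧ ∀ b, d b ≠ 0 → b ∈ orbit K a := by
  classical
  have horbit_sum (a : α) (ha : d a ≠ 0) :
      (c * n : ℤ) ≤ ∑ b ∈ (orbit K a).toFinset, d b ^ 2 := by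
    have hconst : ∀ b ∈ (orbit K a).toFinset, d b ^ 2 = d a ^ 2 := by
      intro b hb
      obtain ⟨k, rfl⟩ := Set.mem_toFinset.1 hb
      rw [hd]
    have hc : (c : ℤ) ≤ |d a| := Int.le_of_dvd (abs_pos.2 ha) ((dvd_abs _ _).2 (hdvd a))
    have hO : (n : ℤ) ≤ c * (orbit K a).toFinset.card := by
      rw [Set.toFinset_card, ← Nat.card_eq_fintype_card]
      exact_mod_cast horbit a
    rw [Finset.sum_congr rfl hconst, Finset.sum_const, nsmul_eq_mul, ← sq_abs]
    nlinarith [sq_nonneg (|d a| - c), abs_nonneg (d a)]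
  obtain ⟨a, ha⟩ : ∃ a, d a ≠ 0 := by
    by_contra! h
    have : (c * n : ℤ) = 0 := by simp [← hsum, h]
    exact hcn.ne' (by exact_mod_cast this)
  refine ⟨a, ha, fun b hb => by_contra fun hba => ?_⟩
  have hdisj : Disjoint (orbit K a).toFinset (orbit K b).toFinset := by
    refine Set.disjoint_toFinset.2 (Set.disjoint_left.2 fun x hxa hxb => hba ?_)
    exact orbit_eq_iff.1 ((orbit_eq_iff.2 hxb).symm.trans (orbit_eq_iff.2 hxa))
  have htotal := Finset.sum_le_sum_of_subset_of_nonneg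
    (Finset.subset_univ ((orbit K a).toFinset ∪ (orbit K b).toFinset))
    fun x _ _ => sq_nonneg (d x)
  rw [Finset.sum_union hdisj, hsum] at htotal
  have := horbit_sum a ha
  have := horbit_sum b hb
  linarith

section FixedPoints

theorem mem_fixedPoints_range_iff {M N α : Type*} [Group M] [Group N] [MulAction N α]
    (f : M →* N) {a : α} : a ∈ fixedPoints f.range α ↔ ∀ m, f m • a = a :=
  ⟨fun h m => h ⟨f m, m, rfl⟩, by rintro h ⟨_, m, rfl⟩; exact h m⟩

variable {M A B : Type*} [Group M] [MulAction M A] [MulAction M B]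

theorem card_fixedPoints_sum [Finite A] [Finite B] (S : Subgroup M) :
    Nat.card (fixedPoints S (A ⊕ B)) =
      Nat.card (fixedPoints S A) + Nat.card (fixedPoints S B) := by
  rw [← Nat.card_sum]
  refine Nat.card_congr (Equiv.subtypeSum.trans (Equiv.sumCongr
    (Equiv.subtypeEquivRight fun a => ?_) (Equiv.subtypeEquivRight fun b => ?_))) <;>
  simp [mem_fixedPoints, Subgroup.smul_def]

theorem card_fixedPoints_prod (S : Subgroup M) :
    Nat.card (fixedPoints S (A × B)) =
      Nat.card (fixedPoints S A) * Nat.card (fixedPoints S B) := by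
  rw [← Nat.card_prod]
  refine Nat.card_congr ((Equiv.subtypeEquivRight fun p => ?_).trans Equiv.subtypeProdEquivProd)
  simp [mem_fixedPoints, Prod.ext_iff, forall_and]

theorem IsoAsGSets.card_fixedPoints_eq (h : IsoAsGSets M A B) (S : Subgroup M) :
    Nat.card (fixedPoints S A) = Nat.card (fixedPoints S B) := by
  obtain ⟨e, he⟩ := h
  exact Nat.card_congr (e.subtypeEquiv fun a => by
    simp only [mem_fixedPoints, Subgroup.smul_def, ← he, e.apply_eq_iff_eq])

end FixedPoints

section Bisets

variable {G H : Type*} [Group G] [Group H]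

theorem mem_fixedPoints_fullTwistedDiagonal {A : Type*} [MulAction (G × H) A] {φ : H ≃* G}
    {a : A} : a ∈ fixedPoints (fullTwistedDiagonal φ) A ↔ ∀ h : H, (φ h, h) • a = a :=
  mem_fixedPoints_range_iff _

theorem mem_fixedPoints_diagSubgroup_top {A : Type*} [MulAction (G × G) A] {a : A} :
    a ∈ fixedPoints (diagSubgroup (⊤ : Subgroup G)) A ↔ ∀ g : G, (g, g) • a = a :=
  (mem_fixedPoints_range_iff _).trans ⟨fun h g => h ⟨g, trivial⟩, fun h g => h g⟩

theorem card_fixedPoints_diagSubgroup_bisetGrp :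
    Nat.card (fixedPoints (diagSubgroup (⊤ : Subgroup G)) (BisetGrp G)) =
      Nat.card (Subgroup.center G) := by
  refine Nat.card_congr
    (Equiv.subtypeEquiv ⟨BisetGrp.val, BisetGrp.mk, fun _ => rfl, fun _ => rfl⟩ fun x => ?_)
  simp only [mem_fixedPoints_diagSubgroup_top, BisetGrp.smul_def, Subgroup.mem_center_iff]
  refine forall_congr' fun g => ?_
  rw [BisetGrp.mk.injEq]
  exact mul_inv_eq_iff_eq_mul

instance BisetTensor.instFinite {K X Y : Type*} [Group K] [MulAction (G × H) X]
    [MulAction (H × K) Y] [Finite X] [Finite Y] : Finite (BisetTensor G H K X Y) :=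
  Quotient.finite _

variable {U V : Type*} [MulAction (G × H) U] [MulAction (G × H) V]

/-- `(u, v) ↦ u ×_H v°`. -/
def BisetTensor.mkOp (p : U × V) : BisetTensor G H G U (BisetOp H G V) :=
  BisetTensor.mk p

theorem BisetTensor.mkOp_eq_mkOp_iff {p q : U × V} :
    (BisetTensor.mkOp p : BisetTensor G H G U (BisetOp H G V)) = BisetTensor.mkOp q ↔
      ∃ h : H, ((1 : G), h) • p = q :=
  Quotient.eq.trans <| exists_congr fun h =>
    (and_congr eq_comm eq_comm).trans (Prod.ext_iff (x := ((1 : G), h) • p) (y := q)).symm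

theorem BisetTensor.smul_mkOp (g₁ g₂ : G) (p : U × V) :
    (g₁, g₂) • (BisetTensor.mkOp p : BisetTensor G H G U (BisetOp H G V)) =
      BisetTensor.mkOp ((g₁, (1 : H)) • p.1, (g₂, (1 : H)) • p.2) :=
  rfl

theorem BisetTensor.mkOp_mem_fixedPoints_iff {p : U × V} :
    (BisetTensor.mkOp p : BisetTensor G H G U (BisetOp H G V)) ∈
        fixedPoints (diagSubgroup (⊤ : Subgroup G)) (BisetTensor G H G U (BisetOp H G V)) ↔
      ∀ g : G, ∃ h : H, (g, h) • p = p := by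
  refine mem_fixedPoints_diagSubgroup_top.trans (forall_congr' fun g => ?_)
  rw [BisetTensor.smul_mkOp, ← Prod.smul_mk, BisetTensor.mkOp_eq_mkOp_iff]
  simp only [smul_smul, Prod.mk_mul_mk, one_mul, mul_one]

theorem IsBifree.prod (hU : IsBifree G H U) : IsBifree G H (U × V) :=
  ⟨fun g p hp => hU.1 g p.1 (congrArg Prod.fst hp),
    fun h p hp => hU.2 h p.1 (congrArg Prod.fst hp)⟩

theorem BisetTensor.card_preimage_mkOp [Finite U] [Finite V] (hU : IsBifree G H U)
    (S : Set (BisetTensor G H G U (BisetOp H G V))) :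
    Nat.card (BisetTensor.mkOp ⁻¹' S) = Nat.card S * Nat.card H := by
  let _ : MulAction H (U × V) := MulAction.compHom _ (MonoidHom.inr G H)
  have : IsCancelSMul H (U × V) := isCancelSMul_iff_eq_one_of_smul_eq.2 hU.prod.2
  exact card_preimage_of_fibers_eq_orbits (f := BisetTensor.mkOp) (fun t => Quotient.exists_rep t)
    (fun p q => eq_comm.trans BisetTensor.mkOp_eq_mkOp_iff) S

theorem card_mul_card_eq_card_tensor_mul_card [Finite U] [Finite V] (hU : IsBifree G H U) :
    Nat.card U * Nat.card V = Nat.card (BisetTensor G H G U (BisetOp H G V)) * Nat.card H := by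
  simpa [Nat.card_prod] using BisetTensor.card_preimage_mkOp (V := V) hU Set.univ

end Bisets

section TwistedDiagonals

variable {G H W : Type*} [Group G] [Group H] [MulAction (G × H) W]

theorem IsBifree.card_left_dvd_card (hW : IsBifree G H W) : Nat.card G ∣ Nat.card W := by
  let _ : MulAction G W := MulAction.compHom _ (MonoidHom.inl G H)
  have : IsCancelSMul G W := isCancelSMul_iff_eq_one_of_smul_eq.2 hW.1
  exact card_dvd_card_of_isCancelSMul G W

theorem IsBifree.card_right_dvd_card (hW : IsBifree G H W) : Nat.card H ∣ Nat.card W := by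
  let _ : MulAction H W := MulAction.compHom _ (MonoidHom.inr G H)
  have : IsCancelSMul H W := isCancelSMul_iff_eq_one_of_smul_eq.2 hW.2
  exact card_dvd_card_of_isCancelSMul H W

theorem IsBifree.left_unique (hW : IsBifree G H W) {w : W} {g g' : G} {h : H}
    (h₁ : (g, h) • w = w) (h₂ : (g', h) • w = w) : g = g' := by
  have : (g'⁻¹ * g, (1 : H)) • w = w := by
    rw [show (g'⁻¹ * g, (1 : H)) = (g', h)⁻¹ * (g, h) by simp, mul_smul, h₁, inv_smul_eq_iff,
      h₂]
  exact (inv_mul_eq_one.1 (hW.1 _ _ this)).symm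

theorem IsBifree.right_unique (hW : IsBifree G H W) {w : W} {g : G} {h h' : H}
    (h₁ : (g, h) • w = w) (h₂ : (g, h') • w = w) : h = h' := by
  have : ((1 : G), h'⁻¹ * h) • w = w := by
    rw [show ((1 : G), h'⁻¹ * h) = (g, h')⁻¹ * (g, h) by simp, mul_smul, h₁, inv_smul_eq_iff,
      h₂]
  exact (inv_mul_eq_one.1 (hW.2 _ _ this)).symm

theorem IsBifree.pairwise_disjoint_fixedPoints (hW : IsBifree G H W) :
    Pairwise (Function.onFun Disjoint
      fun φ : H ≃* G => fixedPoints (fullTwistedDiagonal φ) W) := by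
  intro φ ψ hne
  refine Set.disjoint_left.2 fun w hφ hψ => hne (MulEquiv.ext fun h => ?_)
  exact hW.left_unique (mem_fixedPoints_fullTwistedDiagonal.1 hφ h)
    (mem_fixedPoints_fullTwistedDiagonal.1 hψ h)

theorem IsBifree.exists_mem_fixedPoints_fullTwistedDiagonal [Finite H]
    (hGH : Nat.card G = Nat.card H) (hW : IsBifree G H W) {w : W}
    (hw : ∀ g : G, ∃ h : H, (g, h) • w = w) :
    ∃ φ : H ≃* G, w ∈ fixedPoints (fullTwistedDiagonal φ) W := by
  choose σ hσ using hw
  have hmul : ∀ a b, σ (a * b) = σ a * σ b := fun a b =>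
    hW.right_unique (hσ (a * b)) (by rw [← Prod.mk_mul_mk, mul_smul, hσ b, hσ a])
  let σ' : G →* H := MonoidHom.mk' σ hmul
  have hinj : Function.Injective σ' := (injective_iff_map_eq_one σ').2 fun g hg =>
    hW.1 g w (by rw [← show σ g = 1 from hg]; exact hσ g)
  let e : G ≃* H :=
    MulEquiv.ofBijective σ' ((Nat.bijective_iff_injective_and_card σ').2 ⟨hinj, hGH⟩)
  refine ⟨e.symm, mem_fixedPoints_fullTwistedDiagonal.2 fun h => ?_⟩
  simpa [show σ (e.symm h) = h from e.apply_symm_apply h] using hσ (e.symm h)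

theorem IsBifree.setOf_forall_exists_smul_eq_eq_iUnion [Finite H]
    (hGH : Nat.card G = Nat.card H) (hW : IsBifree G H W) :
    {w : W | ∀ g : G, ∃ h : H, (g, h) • w = w} =
      ⋃ φ : H ≃* G, fixedPoints (fullTwistedDiagonal φ) W := by
  ext w
  rw [Set.mem_iUnion]
  refine ⟨hW.exists_mem_fixedPoints_fullTwistedDiagonal hGH, ?_⟩
  rintro ⟨φ, hφ⟩ g
  exact ⟨φ.symm g, by simpa using mem_fixedPoints_fullTwistedDiagonal.1 hφ (φ.symm g)⟩

theorem IsBifree.card_setOf_forall_exists_smul_eq [Finite H] [Finite W]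
    [Fintype (H ≃* G)] (hGH : Nat.card G = Nat.card H) (hW : IsBifree G H W) :
    Nat.card {w : W | ∀ g : G, ∃ h : H, (g, h) • w = w} =
      ∑ φ : H ≃* G, Nat.card (fixedPoints (fullTwistedDiagonal φ) W) := by
  rw [hW.setOf_forall_exists_smul_eq_eq_iUnion hGH,
    Nat.card_congr (Set.unionEqSigmaOfDisjoint hW.pairwise_disjoint_fixedPoints), Nat.card_sigma]

theorem card_fixedPoints_diagSubgroup_tensor_mul_card [Finite H] [Fintype (H ≃* G)]
    {U V : Type*} [MulAction (G × H) U] [MulAction (G × H) V] [Finite U] [Finite V]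
    (hGH : Nat.card G = Nat.card H) (hU : IsBifree G H U) :
    Nat.card (fixedPoints (diagSubgroup (⊤ : Subgroup G))
        (BisetTensor G H G U (BisetOp H G V))) * Nat.card H =
      ∑ φ : H ≃* G, Nat.card (fixedPoints (fullTwistedDiagonal φ) U) *
        Nat.card (fixedPoints (fullTwistedDiagonal φ) V) := by
  simp_rw [← card_fixedPoints_prod, ← (hU.prod (V := V)).card_setOf_forall_exists_smul_eq hGH,
    ← BisetTensor.card_preimage_mkOp hU]
  congr 2
  ext p
  exact BisetTensor.mkOp_mem_fixedPoints_iff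

end TwistedDiagonals

section Conjugation

variable {G H : Type*} [Group G] [Group H]

instance MulEquiv.conjMulAction : MulAction G (H ≃* G) where
  smul g φ := φ.trans (MulAut.conj g)
  one_smul φ := MulEquiv.ext fun h => by
    change MulAut.conj (1 : G) (φ h) = φ h
    simp
  mul_smul g g' φ := MulEquiv.ext fun h => by
    change MulAut.conj (g * g') (φ h) = MulAut.conj g (MulAut.conj g' (φ h))
    simp [mul_assoc]

theorem MulEquiv.conj_smul_apply (g : G) (φ : H ≃* G) (h : H) : (g • φ) h = g * φ h * g⁻¹ :=
  rfl

theorem stabilizer_mulEquiv_eq_center (φ : H ≃* G) : stabilizer G φ = Subgroup.center G := by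
  ext g
  simp only [mem_stabilizer_iff, Subgroup.mem_center_iff, MulEquiv.ext_iff,
    MulEquiv.conj_smul_apply, mul_inv_eq_iff_eq_mul]
  exact ⟨fun hg x => by simpa using (hg (φ.symm x)).symm, fun hg h => (hg (φ h)).symm⟩

theorem card_orbit_mulEquiv_mul_card_center (φ : H ≃* G) :
    Nat.card (orbit G φ) * Nat.card (Subgroup.center G) = Nat.card G := by
  rw [Nat.card_coe_set_eq, ← index_stabilizer, stabilizer_mulEquiv_eq_center, mul_comm,
    Subgroup.card_mul_index]

variable {U : Type*} [MulAction (G × H) U]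

theorem card_fixedPoints_fullTwistedDiagonal_smul (g : G) (φ : H ≃* G) :
    Nat.card (fixedPoints (fullTwistedDiagonal (g • φ)) U) =
      Nat.card (fixedPoints (fullTwistedDiagonal φ) U) := by
  refine (Nat.card_congr ((MulAction.toPerm ((g, 1) : G × H)).subtypeEquiv fun u => ?_)).symm
  simp only [mem_fixedPoints_fullTwistedDiagonal, toPerm_apply]
  refine forall_congr' fun h => ?_
  rw [← mul_smul, MulEquiv.conj_smul_apply,
    show ((g * φ h * g⁻¹, h) * (g, 1) : G × H) = (g, 1) * (φ h, h) by simp [mul_assoc],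
    mul_smul, smul_left_cancel_iff]

theorem card_center_dvd_card_fixedPoints (hU : IsBifree G H U) (φ : H ≃* G) :
    Nat.card (Subgroup.center G) ∣ Nat.card (fixedPoints (fullTwistedDiagonal φ) U) := by
  let _ : MulAction G U := MulAction.compHom _ (MonoidHom.inl G H)
  have : IsCancelSMul (Subgroup.center G) U :=
    isCancelSMul_iff_eq_one_of_smul_eq.2 fun z u hz => Subtype.ext (hU.1 z u hz)
  -- the centre, embedded as `Z(G) × 1`, commutes with `Δ(G,φ,H)`
  let P : SubMulAction (Subgroup.center G) U :=
    { carrier := fixedPoints (fullTwistedDiagonal φ) U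
      smul_mem' := fun z u hu => mem_fixedPoints_fullTwistedDiagonal.2 fun h => by
        change (φ h, h) • ((z : G), (1 : H)) • u = ((z : G), (1 : H)) • u
        rw [← mul_smul, show ((φ h, h) * ((z : G), 1) : G × H) = ((z : G), 1) * (φ h, h) by
          simp [(Subgroup.mem_center_iff.1 z.2 (φ h)).symm], mul_smul,
          mem_fixedPoints_fullTwistedDiagonal.1 hu h] }
  exact card_dvd_card_of_isCancelSMul (Subgroup.center G) P

end Conjugation

section OrthogonalPair

variable {G H X Y : Type*} [Group G] [Group H] [MulAction (G × H) X] [MulAction (G × H) Y]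
  [Finite G] [Finite X] [Finite Y]

theorem IsOrthogonalPair.card_tensor_add (h : IsOrthogonalPair G H X Y) :
    Nat.card (BisetTensor G H G X (BisetOp H G X)) +
        Nat.card (BisetTensor G H G Y (BisetOp H G Y)) =
      Nat.card G + (Nat.card (BisetTensor G H G X (BisetOp H G Y)) +
        Nat.card (BisetTensor G H G Y (BisetOp H G X))) := by
  obtain ⟨e, -⟩ := h
  have := Nat.card_congr e
  rwa [Nat.card_sum, Nat.card_sum, Nat.card_sum,
    Nat.card_congr (⟨BisetGrp.val, BisetGrp.mk, fun _ => rfl, fun _ => rfl⟩ : BisetGrp G ≃ G)]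
    at this

theorem IsOrthogonalPair.card_fixedPoints_tensor_add (h : IsOrthogonalPair G H X Y)
    (S : Subgroup (G × G)) :
    Nat.card (fixedPoints S (BisetTensor G H G X (BisetOp H G X))) +
        Nat.card (fixedPoints S (BisetTensor G H G Y (BisetOp H G Y))) =
      Nat.card (fixedPoints S (BisetGrp G)) +
        (Nat.card (fixedPoints S (BisetTensor G H G X (BisetOp H G Y))) +
          Nat.card (fixedPoints S (BisetTensor G H G Y (BisetOp H G X)))) := by
  have := h.card_fixedPoints_eq S
  rwa [card_fixedPoints_sum, card_fixedPoints_sum, card_fixedPoints_sum] at this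

theorem IsOrthogonalPair.card_eq_card [Finite H] (hX : IsBifree G H X) (hY : IsBifree G H Y)
    (h : IsOrthogonalPair G H X Y) : Nat.card G = Nat.card H := by
  have hcard := congrArg (· * Nat.card H) h.card_tensor_add
  simp only [add_mul, ← card_mul_card_eq_card_tensor_mul_card hX,
    ← card_mul_card_eq_card_tensor_mul_card hY] at hcard
  have hsq : ((Nat.card X : ℤ) - Nat.card Y) ^ 2 = Nat.card G * Nat.card H := by
    have := congrArg (Nat.cast : ℕ → ℤ) hcard
    push_cast at this
    linear_combination this
  have hdvd {n : ℕ} (hX : n ∣ Nat.card X) (hY : n ∣ Nat.card Y) :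
      (n : ℤ) ∣ Nat.card X - Nat.card Y :=
    dvd_sub (Int.natCast_dvd_natCast.2 hX) (Int.natCast_dvd_natCast.2 hY)
  exact Int.natCast_inj.1 <| Int.eq_of_sq_eq_mul_of_dvd (by simp [Nat.card_pos])
    (by simp [Nat.card_pos]) hsq (hdvd hX.card_left_dvd_card hY.card_left_dvd_card)
    (hdvd hX.card_right_dvd_card hY.card_right_dvd_card)

theorem IsOrthogonalPair.sum_sq_sub_eq [Finite H] [Fintype (H ≃* G)]
    (hGH : Nat.card G = Nat.card H) (hX : IsBifree G H X) (hY : IsBifree G H Y)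
    (h : IsOrthogonalPair G H X Y) :
    ∑ φ : H ≃* G, ((Nat.card (fixedPoints (fullTwistedDiagonal φ) X) : ℤ) -
        Nat.card (fixedPoints (fullTwistedDiagonal φ) Y)) ^ 2 =
      Nat.card (Subgroup.center G) * Nat.card H := by
  have hmarks := congrArg (fun n : ℕ => ((n * Nat.card H : ℕ) : ℤ))
    (h.card_fixedPoints_tensor_add (diagSubgroup ⊤))
  simp only [add_mul, card_fixedPoints_diagSubgroup_tensor_mul_card hGH hX,
    card_fixedPoints_diagSubgroup_tensor_mul_card hGH hY, card_fixedPoints_diagSubgroup_bisetGrp,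
    Nat.cast_add, Nat.cast_mul, Nat.cast_sum] at hmarks
  have hexpand (a b : H ≃* G → ℤ) : ∑ φ, (a φ - b φ) ^ 2 =
      ∑ φ, a φ * a φ + ∑ φ, b φ * b φ - (∑ φ, a φ * b φ + ∑ φ, b φ * a φ) := by
    simp only [← Finset.sum_add_distrib, ← Finset.sum_sub_distrib]
    exact Finset.sum_congr rfl fun _ _ => by ring
  exact (hexpand _ _).trans (by rw [hmarks]; ring)

end OrthogonalPair

/-- for an orthogonal pair `(X,Y)` of finite bifree `(G,H)`-bisets there is an
isomorphism `φ : H ≃* G` whose full twisted diagonal separates the marks of `X` and `Y`, and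
`φ` is unique up to composition with inner automorphisms of `G`. -/
theorem statement12 {G H : Type*} [Group G] [Group H] [Finite G] [Finite H]
    (X Y : Type*) [MulAction (G × H) X] [MulAction (G × H) Y] [Finite X] [Finite Y]
    (hX : IsBifree G H X) (hY : IsBifree G H Y) (horth : IsOrthogonalPair G H X Y) :
    ∃ φ : H ≃* G,
      (Nat.card (MulAction.fixedPoints (fullTwistedDiagonal φ) X) ≠
        Nat.card (MulAction.fixedPoints (fullTwistedDiagonal φ) Y)) ∧
      ∀ ψ : H ≃* G,
        Nat.card (MulAction.fixedPoints (fullTwistedDiagonal ψ) X) ≠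
          Nat.card (MulAction.fixedPoints (fullTwistedDiagonal ψ) Y) →
        ∃ g : G, ∀ h : H, ψ h = g * φ h * g⁻¹ := by
  have : Fintype (H ≃* G) := Fintype.ofFinite _
  have hGH := horth.card_eq_card hX hY
  obtain ⟨φ, hφ, hunique⟩ := exists_unique_orbit_ne_zero_of_sum_sq_eq (K := G)
    (d := fun φ => (Nat.card (fixedPoints (fullTwistedDiagonal φ) X) : ℤ) -
      Nat.card (fixedPoints (fullTwistedDiagonal φ) Y))
    (fun g φ => by simp only [card_fixedPoints_fullTwistedDiagonal_smul])
    (Nat.mul_pos Nat.card_pos Nat.card_pos)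
    (fun φ => dvd_sub (Int.natCast_dvd_natCast.2 (card_center_dvd_card_fixedPoints hX φ))
      (Int.natCast_dvd_natCast.2 (card_center_dvd_card_fixedPoints hY φ)))
    (fun φ => by rw [← hGH, ← card_orbit_mulEquiv_mul_card_center φ, mul_comm])
    (horth.sum_sq_sub_eq hGH hX hY)
  refine ⟨φ, fun h => hφ (by rw [h, sub_self]), fun ψ hψ => ?_⟩
  obtain ⟨g, rfl⟩ := hunique ψ (sub_ne_zero.2 (Nat.cast_injective.ne hψ))
  exact ⟨g, fun h => rfl⟩
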